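/- arXiv:1401.4775 — 7 statements merged into one kernel-verified Lean document; each statement's English description precedes it below -/
import Mathlib

section
/- Let X be a Hausdorff, locally compact topological space. Suppose X contains a nontrivial convergent sequence, i.e., there exist a point x₀ ∈ X and a sequence (x_n) in X with x_n ≠ x₀ for all n and x_n → x₀. Then X is not an F-space: there exists a bounded continuous real-valued function f on X such that there is no bounded continuous real-valued function k on X with f = k·|f|. -/
/-!
Pass to a subsequence `y` of `x` whose points have pairwise disjoint open neighbourhoods `U k`
(possible because each `x m` can be separated from `x₀`, and then the search continues inside the
neighbourhood of `x₀`). Urysohn bumps supported in the `U k` glue to a bounded continuous `f`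
with `f (y j) = (-1/2) ^ j`. If `f = k * |f|` with `k` continuous, then `k (y j) = (-1) ^ j`,
so `k x₀` would be both `1` and `-1`.
-/

open Filter Function Set Topology

namespace Filter.Tendsto

variable {X : Type*} [TopologicalSpace X] [T2Space X] {x₀ : X} {x : ℕ → X}

theorem exists_ge_mem_disjoint_open (hconv : Tendsto x atTop (𝓝 x₀)) (hx : ∀ n, x n ≠ x₀)
    {G : Set X} (hG : IsOpen G) (hx₀G : x₀ ∈ G) (n : ℕ) :
    ∃ m, n ≤ m ∧ ∃ U G' : Set X, IsOpen U ∧ x m ∈ U ∧ U ⊆ G ∧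
      IsOpen G' ∧ x₀ ∈ G' ∧ G' ⊆ G ∧ Disjoint U G' := by
  obtain ⟨m, hmG, hnm⟩ :=
    ((hconv.eventually (hG.mem_nhds hx₀G)).and (eventually_ge_atTop n)).exists
  obtain ⟨V, W, hV, hW, hxV, hx₀W, hVW⟩ := t2_separation (hx m)
  exact ⟨m, hnm, V ∩ G, W ∩ G, hV.inter hG, ⟨hxV, hmG⟩, inter_subset_right,
    hW.inter hG, ⟨hx₀W, hx₀G⟩, inter_subset_right,
    hVW.mono inter_subset_left inter_subset_left⟩

theorem exists_seq_pairwise_disjoint_open_nhds (hconv : Tendsto x atTop (𝓝 x₀))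
    (hx : ∀ n, x n ≠ x₀) :
    ∃ y : ℕ → X, Tendsto y atTop (𝓝 x₀) ∧ ∃ U : ℕ → Set X,
      (∀ k, IsOpen (U k)) ∧ (∀ k, y k ∈ U k) ∧ Pairwise (Disjoint on U) := by
  let N := {G : Set X // IsOpen G ∧ x₀ ∈ G}
  have step : ∀ (n : ℕ) (G : N), ∃ m, n ≤ m ∧ ∃ (U : Set X) (G' : N),
      IsOpen U ∧ x m ∈ U ∧ U ⊆ G.1 ∧ G'.1 ⊆ G.1 ∧ Disjoint U G'.1 := by
    intro n G
    obtain ⟨m, hnm, U, G', hU, hxU, hUG, hG', hx₀G', hG'G, hUG'⟩ :=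
      hconv.exists_ge_mem_disjoint_open hx G.2.1 G.2.2 n
    exact ⟨m, hnm, U, ⟨G', hG', hx₀G'⟩, hU, hxU, hUG, hG'G, hUG'⟩
  choose m hm U G' hU hxU hUG hG'G hdisj using step
  -- `G (k + 1) = G' k (G k)`: the neighbourhood of `x₀` in which the search continues.
  let G : ℕ → N := fun k => Nat.rec ⟨univ, isOpen_univ, mem_univ x₀⟩ G' k
  have hG : Antitone fun k => (G k).1 := antitone_nat_of_succ_le fun k => hG'G k (G k)
  refine ⟨fun k => x (m k (G k)),
    hconv.comp (tendsto_atTop_mono (fun k => hm k (G k)) tendsto_id),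
    fun k => U k (G k), fun k => hU k (G k), fun k => hxU k (G k), ?_⟩
  exact (pairwise_disjoint_on _).2 fun j k hjk =>
    (hdisj j (G j)).mono_right ((hUG k (G k)).trans (hG hjk))

end Filter.Tendsto

section

variable {X : Type*} [TopologicalSpace X]

theorem exists_continuous_isBounded_eq_of_pairwise_disjoint_open [RegularSpace X]
    [LocallyCompactSpace X] {y : ℕ → X} {U : ℕ → Set X} (hU : ∀ k, IsOpen (U k))
    (hyU : ∀ k, y k ∈ U k) (hdisj : Pairwise (Disjoint on U)) {a : ℕ → ℝ}
    (ha : Summable fun k => ‖a k‖) :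
    ∃ f : X → ℝ, Continuous f ∧ Bornology.IsBounded (range f) ∧ ∀ j, f (y j) = a j := by
  have bump : ∀ k, ∃ φ : C(X, ℝ), φ (y k) = 1 ∧ EqOn φ 0 (U k)ᶜ ∧ ∀ z, φ z ∈ Icc (0 : ℝ) 1 := by
    intro k
    obtain ⟨φ, hφ1, hφ0, -, hφI⟩ := exists_continuous_one_zero_of_isCompact isCompact_singleton
      (hU k).isClosed_compl (disjoint_singleton_left.2 (not_not.2 (hyU k)))
    exact ⟨φ, hφ1 rfl, hφ0, hφI⟩
  choose φ hφ1 hφ0 hφI using bump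
  have hbound : ∀ k z, ‖a k * φ k z‖ ≤ ‖a k‖ := fun k z => by
    rw [norm_mul, Real.norm_of_nonneg (hφI k z).1]
    exact mul_le_of_le_one_right (norm_nonneg _) (hφI k z).2
  refine ⟨fun z => ∑' k, a k * φ k z,
    continuous_tsum (fun k => continuous_const.mul (φ k).continuous) ha hbound, ?_, fun j => ?_⟩
  · exact isBounded_iff_forall_norm_le.2 ⟨∑' k, ‖a k‖,
      forall_mem_range.2 fun z => tsum_of_norm_bounded ha.hasSum fun k => hbound k z⟩
  · dsimp only
    rw [tsum_eq_single j fun k hk => ?_, hφ1, mul_one]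
    rw [hφ0 k fun h => (hdisj hk).ne_of_mem h (hyU j) rfl, Pi.zero_apply, mul_zero]

theorem ne_mul_abs_of_tendsto_of_sign_alternates {f k : X → ℝ} {y : ℕ → X} {x₀ : X}
    (hy : Tendsto y atTop (𝓝 x₀)) (hk : ContinuousAt k x₀)
    (hpos : ∀ j, 0 < f (y (2 * j))) (hneg : ∀ j, f (y (2 * j + 1)) < 0) :
    f ≠ fun z => k z * |f z| := by
  intro hf
  have hk_pos : ∀ z, 0 < f z → k z = 1 := fun z hz => by
    have h := congrFun hf z
    rw [abs_of_pos hz] at h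
    exact (mul_eq_right₀ hz.ne').1 h.symm
  have hk_neg : ∀ z, f z < 0 → k z = -1 := fun z hz => by
    have h := congrFun hf z
    rw [abs_of_neg hz] at h
    have h' : (k z + 1) * f z = 0 := by linear_combination h
    simpa [hz.ne, add_eq_zero_iff_eq_neg] using h'
  have h_one : k x₀ = 1 := tendsto_nhds_unique
    (hk.tendsto.comp (hy.comp (tendsto_atTop_mono (fun j => by dsimp only [id]; omega) tendsto_id)))
    (tendsto_const_nhds.congr fun j => (hk_pos _ (hpos j)).symm)
  have h_neg_one : k x₀ = -1 := tendsto_nhds_unique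
    (hk.tendsto.comp (hy.comp (tendsto_atTop_mono (fun j => by dsimp only [id]; omega) tendsto_id)))
    (tendsto_const_nhds.congr fun j => (hk_neg _ (hneg j)).symm)
  linarith

end

/-- A Hausdorff locally compact space containing a nontrivial convergent sequence
is not an F-space. -/
theorem stmt_0 {X : Type*} [TopologicalSpace X] [T2Space X] [LocallyCompactSpace X]
    (x₀ : X) (x : ℕ → X) (hx : ∀ n, x n ≠ x₀)
    (hconv : Filter.Tendsto x Filter.atTop (nhds x₀)) :
    ∃ f : X → ℝ, Continuous f ∧ Bornology.IsBounded (Set.range f) ∧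
      ¬ ∃ k : X → ℝ, Continuous k ∧ Bornology.IsBounded (Set.range k) ∧
        f = fun y => k y * |f y| := by
  obtain ⟨y, hy, U, hU, hyU, hdisj⟩ := hconv.exists_seq_pairwise_disjoint_open_nhds hx
  obtain ⟨f, hf, hf_bdd, hfy⟩ := exists_continuous_isBounded_eq_of_pairwise_disjoint_open
    hU hyU hdisj (a := fun k => (-1 / 2 : ℝ) ^ k) (by simpa [norm_pow] using summable_geometric_two)
  refine ⟨f, hf, hf_bdd, ?_⟩
  rintro ⟨k, hk, -, hfk⟩
  refine ne_mul_abs_of_tendsto_of_sign_alternates hy hk.continuousAt (fun j => ?_) (fun j => ?_) hfk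
  · rw [hfy]
    exact (even_two_mul j).pow_pos (by norm_num)
  · rw [hfy]
    exact (odd_two_mul_add_one j).pow_neg (by norm_num)
end

section
/- Let X be a compact Hausdorff space. Then X is an F-space if and only if for all σ-compact subsets A and B of X satisfying cl(A) ∩ B = ∅ and A ∩ cl(B) = ∅, one has cl(A) ∩ cl(B) = ∅ (where cl denotes closure in X). -/
/-!
If `f = k * |f|` with `k` continuous, then `k = 1` on `closure {f > 0}` and `k = -1` on
`closure {f < 0}`, so these closures are disjoint; conversely, when they are disjoint a Urysohn
function equal to `1` and `-1` on them is such a `k`. In a compact space `{f > 0}` and `{f < 0}`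
are σ-compact and separated, which gives one implication. For the other, separated σ-compact sets
`A = ⋃ Kₙ`, `B = ⋃ Lₙ` are contained in `{f > 0}` and `{f < 0}` for `f = ∑ 2⁻ⁿ (uₙ - vₙ)`, where the
Urysohn functions `uₙ`, `vₙ` are `1` on `Kₙ`, resp. `Lₙ`, and vanish on `closure B`, resp. `closure A`.
-/

open Set BoundedContinuousFunction

section

variable {X : Type*} [TopologicalSpace X]

theorem exists_continuous_eqOn_zero_pos_on_iUnion [NormalSpace X] {C : Set X} {K : ℕ → Set X}
    (hC : IsClosed C) (hK : ∀ n, IsClosed (K n)) (hCK : Disjoint C (⋃ n, K n)) :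
    ∃ f : X → ℝ, Continuous f ∧ EqOn f 0 C ∧ ∀ x ∈ ⋃ n, K n, 0 < f x := by
  choose F hF0 hF1 hF01 using fun n =>
    exists_continuous_zero_one_of_isClosed hC (hK n) (hCK.mono_right (subset_iUnion K n))
  have hbound : ∀ n x, ‖(1 / 2 : ℝ) ^ n * F n x‖ ≤ (1 / 2) ^ n := fun n x => by
    rw [norm_mul, Real.norm_of_nonneg (by positivity), Real.norm_of_nonneg (hF01 n x).1]
    exact mul_le_of_le_one_right (by positivity) (hF01 n x).2
  refine ⟨fun x => ∑' n, (1 / 2 : ℝ) ^ n * F n x,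
    continuous_tsum (fun n => continuous_const.mul (F n).continuous) summable_geometric_two hbound,
    fun x hx => by simp [hF0 _ hx], fun x hx => ?_⟩
  obtain ⟨m, hm⟩ := mem_iUnion.1 hx
  exact (summable_geometric_two.of_norm_bounded fun n => hbound n x).tsum_pos
    (fun n => mul_nonneg (by positivity) (hF01 n x).1) m (by simp [hF1 m hm])

theorem exists_continuous_pos_on_iUnion_neg_on_iUnion [NormalSpace X] {K L : ℕ → Set X}
    (hK : ∀ n, IsClosed (K n)) (hL : ∀ n, IsClosed (L n))
    (hKL : Disjoint (⋃ n, K n) (closure (⋃ n, L n)))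
    (hLK : Disjoint (closure (⋃ n, K n)) (⋃ n, L n)) :
    ∃ f : X → ℝ, Continuous f ∧
      (⋃ n, K n) ⊆ {x | 0 < f x} ∧ (⋃ n, L n) ⊆ {x | f x < 0} := by
  obtain ⟨g, hgc, hg0, hgpos⟩ :=
    exists_continuous_eqOn_zero_pos_on_iUnion isClosed_closure hK hKL.symm
  obtain ⟨h, hhc, hh0, hhpos⟩ :=
    exists_continuous_eqOn_zero_pos_on_iUnion isClosed_closure hL hLK
  refine ⟨g - h, hgc.sub hhc, fun x hx => ?_, fun x hx => ?_⟩
  · simpa [hh0 (subset_closure hx)] using hgpos x hx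
  · simpa [hg0 (subset_closure hx)] using hhpos x hx

theorem disjoint_closure_pos_closure_neg_of_eq_mul_abs {f k : X → ℝ} (hk : Continuous k)
    (hfk : f = fun y => k y * |f y|) :
    Disjoint (closure {x | 0 < f x}) (closure {x | f x < 0}) := by
  have hpos : closure {x | 0 < f x} ⊆ k ⁻¹' {1} :=
    closure_minimal (fun x (hx : 0 < f x) => by
      have := congrFun hfk x
      rw [abs_of_pos hx] at this
      exact (mul_eq_right₀ hx.ne').1 this.symm)
      (isClosed_singleton.preimage hk)
  have hneg : closure {x | f x < 0} ⊆ k ⁻¹' {-1} :=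
    closure_minimal (fun x (hx : f x < 0) => by
      have := congrFun hfk x
      rw [abs_of_neg hx] at this
      show k x = -1
      nlinarith)
      (isClosed_singleton.preimage hk)
  exact ((disjoint_singleton.2 (by norm_num)).preimage k).mono hpos hneg

theorem exists_eq_mul_abs_of_disjoint_closure [NormalSpace X] {f : X → ℝ}
    (h : Disjoint (closure {x | 0 < f x}) (closure {x | f x < 0})) :
    ∃ k : X →ᵇ ℝ, f = fun y => k y * |f y| := by
  obtain ⟨k, hk_neg, hk_pos, -⟩ :=
    exists_bounded_mem_Icc_of_closed_of_le isClosed_closure isClosed_closure h.symm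
      (show (-1 : ℝ) ≤ 1 by norm_num)
  refine ⟨k, funext fun x => ?_⟩
  rcases lt_trichotomy (f x) 0 with hx | hx | hx
  · rw [hk_neg (subset_closure hx), abs_of_neg hx]; simp
  · simp [hx]
  · rw [hk_pos (subset_closure hx), abs_of_pos hx]; simp

theorem isSigmaCompact_setOf_pos [CompactSpace X] {f : X → ℝ} (hf : Continuous f) :
    IsSigmaCompact {x | 0 < f x} := by
  refine ⟨fun n => {x | 1 / (n + 1 : ℝ) ≤ f x},
    fun n => (isClosed_le continuous_const hf).isCompact, ?_⟩
  ext x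
  simp only [mem_iUnion, mem_ofPred_eq]
  exact ⟨fun ⟨n, hn⟩ => (Nat.one_div_pos_of_nat).trans_le hn,
    fun hx => (exists_nat_one_div_lt hx).imp fun _ => le_of_lt⟩

end

/-- A compact Hausdorff space is an F-space iff for all σ-compact subsets `A`, `B`
with `closure A ∩ B = ∅` and `A ∩ closure B = ∅`, one has `closure A ∩ closure B = ∅`. -/
theorem stmt_4 {X : Type*} [TopologicalSpace X] [CompactSpace X] [T2Space X] :
    (∀ f : X → ℝ, Continuous f → Bornology.IsBounded (Set.range f) →
      ∃ k : X → ℝ, Continuous k ∧ Bornology.IsBounded (Set.range k) ∧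
        f = fun y => k y * |f y|) ↔
    (∀ A B : Set X,
      (∃ K : ℕ → Set X, (∀ n, IsCompact (K n)) ∧ A = ⋃ n, K n) →
      (∃ K : ℕ → Set X, (∀ n, IsCompact (K n)) ∧ B = ⋃ n, K n) →
      closure A ∩ B = ∅ → A ∩ closure B = ∅ → closure A ∩ closure B = ∅) := by
  constructor
  · rintro hF A B ⟨K, hK, rfl⟩ ⟨L, hL, rfl⟩ hAB hBA
    obtain ⟨f, hf, hA, hB⟩ := exists_continuous_pos_on_iUnion_neg_on_iUnion
      (fun n => (hK n).isClosed) (fun n => (hL n).isClosed)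
      (disjoint_iff_inter_eq_empty.2 hBA) (disjoint_iff_inter_eq_empty.2 hAB)
    obtain ⟨k, hk, -, hfk⟩ := hF f hf (isCompact_range hf).isBounded
    exact disjoint_iff_inter_eq_empty.1
      ((disjoint_closure_pos_closure_neg_of_eq_mul_abs hk hfk).mono
        (closure_mono hA) (closure_mono hB))
  · intro hsep f hf _
    have eq_iUnion_of_isSigmaCompact {s : Set X} (hs : IsSigmaCompact s) :
        ∃ K : ℕ → Set X, (∀ n, IsCompact (K n)) ∧ s = ⋃ n, K n :=
      hs.imp fun _ => And.imp_right Eq.symm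
    have hneg : {x | f x < 0} = {x | 0 < -f x} := by simp
    have hA : closure {x | 0 < f x} ∩ {x | f x < 0} = ∅ := eq_empty_of_forall_notMem
      fun x ⟨h0, (hx : f x < 0)⟩ => (closure_lt_subset_le continuous_const hf h0).not_gt hx
    have hB : {x | 0 < f x} ∩ closure {x | f x < 0} = ∅ := eq_empty_of_forall_notMem
      fun x ⟨(hx : 0 < f x), h0⟩ => (closure_lt_subset_le hf continuous_const h0).not_gt hx
    have hdisj := hsep _ _ (eq_iUnion_of_isSigmaCompact (isSigmaCompact_setOf_pos hf))
      (eq_iUnion_of_isSigmaCompact (hneg ▸ isSigmaCompact_setOf_pos hf.neg)) hA hB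
    obtain ⟨k, hfk⟩ := exists_eq_mul_abs_of_disjoint_closure (disjoint_iff_inter_eq_empty.2 hdisj)
    exact ⟨k, k.continuous, k.isBounded_range, hfk⟩
end

section
/- Let X be a discrete topological space and let βX denote its Stone–Čech compactification. Then every compact subset K of βX, equipped with the subspace topology, is an F-space. -/
/-!
`βX` is extremally disconnected, being projective among compact Hausdorff spaces. In an
extremally disconnected space the closure of `{f > 0}` is clopen, so the sign of `f` can be
chosen continuously; hence such spaces are F-spaces. A compact `K ⊆ βX` is closed in a normal
space, so every bounded continuous function on `K` extends to `βX`, and restricting the sign of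
the extension gives the required `k`.
-/

open Set

/-- The characterization of F-spaces among completely regular spaces, taken as the definition. -/
def IsFSpace (Y : Type*) [TopologicalSpace Y] : Prop :=
  ∀ f : Y → ℝ, Continuous f → Bornology.IsBounded (range f) →
    ∃ k : Y → ℝ, Continuous k ∧ Bornology.IsBounded (range k) ∧ f = fun y => k y * |f y|

theorem ExtremallyDisconnected.exists_continuous_sign {Y : Type*} [TopologicalSpace Y]
    [ExtremallyDisconnected Y] {f : Y → ℝ} (hf : Continuous f) :
    ∃ k : Y → ℝ, Continuous k ∧ range k ⊆ {-1, 1} ∧ ∀ y, f y = k y * |f y| := by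
  classical
  set C := closure {y | 0 < f y}
  have hC : IsClopen C :=
    ⟨isClosed_closure, open_closure _ (isOpen_lt continuous_const hf)⟩
  have nonneg_on : ∀ y ∈ C, 0 ≤ f y := fun y hy => closure_lt_subset_le continuous_const hf hy
  have nonpos_off : ∀ y ∉ C, f y ≤ 0 := fun y hy => not_lt.1 fun h => hy (subset_closure h)
  refine ⟨fun y => if y ∈ C then 1 else -1,
    continuous_const.if (by simp [hC.frontier_eq]) continuous_const, ?_, fun y => ?_⟩
  · rintro _ ⟨y, rfl⟩
    by_cases hy : y ∈ C <;> simp [hy]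
  · by_cases hy : y ∈ C
    · simp [hy, abs_of_nonneg (nonneg_on y hy)]
    · simp [hy, abs_of_nonpos (nonpos_off y hy)]

theorem IsFSpace.of_extremallyDisconnected (Y : Type*) [TopologicalSpace Y]
    [ExtremallyDisconnected Y] : IsFSpace Y := by
  intro f hf _
  obtain ⟨k, hk, hk_range, hfk⟩ := ExtremallyDisconnected.exists_continuous_sign hf
  exact ⟨k, hk, ((toFinite _).isBounded).subset hk_range, funext hfk⟩

/-- By Tietze, closed subsets of a normal space are C*-embedded. -/
theorem IsFSpace.subtype_of_isClosed {Y : Type*} [TopologicalSpace Y] [NormalSpace Y]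
    (hY : IsFSpace Y) {s : Set Y} (hs : IsClosed s) : IsFSpace s := by
  intro f hf hf_bdd
  obtain ⟨r, hr_pos, hr⟩ := hf_bdd.subset_closedBall_lt 0 0
  rw [Real.closedBall_eq_Icc] at hr
  obtain ⟨F, hF_mem, hF⟩ := ContinuousMap.exists_restrict_eq_forall_mem_of_closed ⟨f, hf⟩
    (fun x => hr ⟨x, rfl⟩) (nonempty_Icc.2 (by linarith)) hs
  obtain ⟨k, hk, hk_bdd, hFk⟩ := hY F F.continuous
    ((Metric.isBounded_Icc _ _).subset (range_subset_iff.2 hF_mem))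
  refine ⟨k ∘ (↑), hk.comp continuous_subtype_val, hk_bdd.subset (range_comp_subset_range _ _), ?_⟩
  funext y
  have hFy : F y = f y := DFunLike.congr_fun hF y
  simpa only [hFy, Function.comp_apply] using congr_fun hFk y

/-- Every compact subset of the Stone–Čech compactification of a discrete space
is an F-space. -/
theorem stmt_5 {X : Type*} [TopologicalSpace X] [DiscreteTopology X]
    (K : Set (StoneCech X)) (hK : IsCompact K) :
    ∀ f : K → ℝ, Continuous f → Bornology.IsBounded (Set.range f) →
      ∃ k : K → ℝ, Continuous k ∧ Bornology.IsBounded (Set.range k) ∧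
        f = fun y => k y * |f y| := by
  have : ExtremallyDisconnected (StoneCech X) :=
    CompactT2.Projective.extremallyDisconnected StoneCech.projective
  exact (IsFSpace.of_extremallyDisconnected _).subtype_of_isClosed hK.isClosed
end

section
/- Let X be a discrete topological space and let βX denote its Stone–Čech compactification, with X identified with its canonical image in βX. Then the corona βX \ X, equipped with the subspace topology, is an F-space. -/
/-!
Points of a discrete space `X` are isolated in `βX`, so the corona `βX \ X` is closed and, by
Tietze, every continuous function `f` on it extends to a continuous `F` on `βX`. Since `βX` is
extremally disconnected, the closure of `{F < 0}` is clopen, and the function equal to `-1` on it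
and to `1` off it is a continuous `k` with `F = k * |F|`.
-/

open Set

theorem ExtremallyDisconnected.exists_continuous_mul_abs_eq {Y : Type*} [TopologicalSpace Y]
    [ExtremallyDisconnected Y] (f : C(Y, ℝ)) :
    ∃ k : C(Y, ℝ), (∀ y, |k y| ≤ 1) ∧ ∀ y, k y * |f y| = f y := by
  classical
  set C := closure {y | f y < 0}
  have hC : IsClopen C := ⟨isClosed_closure,
    ExtremallyDisconnected.open_closure _ (isOpen_lt f.continuous continuous_const)⟩
  have hpos : ∀ y, 0 < f y → y ∉ C := fun y hy hyC => by
    obtain ⟨z, hz_pos, hz_neg⟩ :=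
      mem_closure_iff.1 hyC _ (isOpen_lt continuous_const f.continuous) hy
    exact lt_asymm (α := ℝ) hz_pos hz_neg
  refine ⟨⟨fun y => if y ∈ C then -1 else 1,
    continuous_if (by simp [hC.frontier_eq]) continuousOn_const continuousOn_const⟩,
    fun y => by simp only [ContinuousMap.coe_mk]; split_ifs <;> simp, fun y => ?_⟩
  rcases lt_trichotomy (f y) 0 with hneg | hzero | hpos'
  · simp [show y ∈ C from subset_closure hneg, abs_of_neg hneg]
  · simp [hzero]
  · simp [hpos y hpos', abs_of_pos hpos']

theorem IsClosed.exists_continuous_mul_abs_eq {Y : Type*} [TopologicalSpace Y] [NormalSpace Y]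
    [ExtremallyDisconnected Y] {S : Set Y} (hS : IsClosed S) (f : C(S, ℝ)) :
    ∃ k : C(S, ℝ), (∀ y, |k y| ≤ 1) ∧ ∀ y, k y * |f y| = f y := by
  obtain ⟨F, rfl⟩ := f.exists_restrict_eq hS
  obtain ⟨k, hk_le, hk⟩ := ExtremallyDisconnected.exists_continuous_mul_abs_eq F
  exact ⟨k.restrict S, fun y => hk_le y, fun y => hk y⟩

section StoneCech

variable {X : Type*} [TopologicalSpace X] [DiscreteTopology X]

instance StoneCech.extremallyDisconnected : ExtremallyDisconnected (StoneCech X) :=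
  CompactT2.Projective.extremallyDisconnected StoneCech.projective

theorem isOpen_singleton_stoneCechUnit (x : X) : IsOpen {stoneCechUnit x} := by
  have hχ : Continuous ({x} : Set X).boolIndicator := continuous_of_discreteTopology
  set U := stoneCechExtend hχ ⁻¹' {true}
  have hU : IsOpen U := (continuous_stoneCechExtend hχ).isOpen_preimage _ (isOpen_discrete _)
  have hxU : stoneCechUnit x ∈ U := by
    simp [U, stoneCechExtend_stoneCechUnit, boolIndicator]
  have hU_range : U ∩ range stoneCechUnit ⊆ {stoneCechUnit x} := by
    rintro _ ⟨hy, y, rfl⟩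
    simp [U, stoneCechExtend_stoneCechUnit, boolIndicator] at hy
    simp [hy]
  have hU_eq : U = {stoneCechUnit x} := by
    refine Subset.antisymm (fun z hz => ?_) (singleton_subset_iff.2 hxU)
    simpa using closure_mono hU_range (denseRange_stoneCechUnit.open_subset_closure_inter hU hz)
  exact hU_eq ▸ hU

theorem isOpen_range_stoneCechUnit : IsOpen (range (stoneCechUnit : X → StoneCech X)) := by
  rw [← iUnion_singleton_eq_range]
  exact isOpen_iUnion isOpen_singleton_stoneCechUnit

end StoneCech

/-- The corona `βX \ X` of the Stone–Čech compactification of a discrete space `X`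
is an F-space. -/
theorem stmt_6 {X : Type*} [TopologicalSpace X] [DiscreteTopology X] :
    ∀ f : ((Set.range (stoneCechUnit : X → StoneCech X))ᶜ : Set (StoneCech X)) → ℝ,
      Continuous f → Bornology.IsBounded (Set.range f) →
      ∃ k : ((Set.range (stoneCechUnit : X → StoneCech X))ᶜ : Set (StoneCech X)) → ℝ,
        Continuous k ∧ Bornology.IsBounded (Set.range k) ∧
        f = fun y => k y * |f y| := by
  intro f hf _
  obtain ⟨k, hk_le, hk⟩ :=
    isOpen_range_stoneCechUnit.isClosed_compl.exists_continuous_mul_abs_eq ⟨f, hf⟩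
  refine ⟨k, k.continuous, (Metric.isBounded_Icc (-1 : ℝ) 1).subset ?_,
    funext fun y => (hk y).symm⟩
  rintro _ ⟨y, rfl⟩
  exact abs_le.1 (hk_le y)
end

section
/- (Kakutani–Kodaira) Let G be a σ-compact, locally compact, Hausdorff topological group. For any sequence (U_n)_{n ≥ 0} of neighbourhoods of the identity of G, there exists a compact normal subgroup N of G contained in ⋂_{n ≥ 0} U_n such that the quotient group G/N is metrizable. -/
/-!
Choose compact symmetric neighbourhoods `V 0 ⊇ V 1 ⊇ ⋯` of `1` with `V n ⊆ U n`,
`V (n+1) * V (n+1) ⊆ V n`, and `g (V (n+1)) g⁻¹ ⊆ V n` for `g` in the `n`-th set of a compact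
exhaustion of `G`; the last condition uses that conjugation is uniformly continuous on compacta.
Then `N = ⋂ n, V n` is a compact normal subgroup, and since the `V n` are compact and decrease
to `N`, every neighbourhood of `N` contains some `V n`. Hence the images of the `V n` form a
countable neighbourhood basis of `1` in `G ⧸ N`, and a first countable Hausdorff group is
metrizable (Birkhoff–Kakutani).
-/

open Set Filter Topology Pointwise

section HalvingSubgroup

variable {G : Type*} [Group G]

theorem antitone_of_mul_subset {V : ℕ → Set G} (hone : ∀ n, (1 : G) ∈ V n)
    (hmul : ∀ n, V (n + 1) * V (n + 1) ⊆ V n) : Antitone V :=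
  antitone_nat_of_succ_le fun n x hx => hmul n ⟨x, hx, 1, hone (n + 1), mul_one x⟩

def halvingSubgroup (V : ℕ → Set G) (hone : ∀ n, (1 : G) ∈ V n) (hinv : ∀ n, (V n)⁻¹ ⊆ V n)
    (hmul : ∀ n, V (n + 1) * V (n + 1) ⊆ V n) : Subgroup G where
  carrier := ⋂ n, V n
  one_mem' := mem_iInter.2 hone
  mul_mem' ha hb := mem_iInter.2 fun n =>
    hmul n (mul_mem_mul (mem_iInter.1 ha (n + 1)) (mem_iInter.1 hb (n + 1)))
  inv_mem' ha := mem_iInter.2 fun n => hinv n (inv_mem_inv.2 (mem_iInter.1 ha n))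

variable {V : ℕ → Set G} {hone : ∀ n, (1 : G) ∈ V n} {hinv : ∀ n, (V n)⁻¹ ⊆ V n}
  {hmul : ∀ n, V (n + 1) * V (n + 1) ⊆ V n}

theorem halvingSubgroup_normal
    (hconj : ∀ g : G, ∀ᶠ n in atTop, ∀ x ∈ V (n + 1), g * x * g⁻¹ ∈ V n) :
    (halvingSubgroup V hone hinv hmul).Normal where
  conj_mem x hx g := mem_iInter.2 fun m => by
    obtain ⟨n, hconj_n, hmn⟩ := ((hconj g).and (eventually_ge_atTop m)).exists
    exact antitone_of_mul_subset hone hmul hmn (hconj_n x (mem_iInter.1 hx (n + 1)))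

end HalvingSubgroup

section TopologicalGroup

variable {G : Type*} [Group G] [TopologicalSpace G] [IsTopologicalGroup G]

theorem IsCompact.eventually_forall_conj_mem {K W : Set G} (hK : IsCompact K)
    (hW : W ∈ 𝓝 (1 : G)) : ∀ᶠ x in 𝓝 (1 : G), ∀ g ∈ K, g * x * g⁻¹ ∈ W :=
  hK.eventually_forall_of_forall_eventually fun g _ => by
    have hconj : Continuous fun p : G × G => p.2 * p.1 * p.2⁻¹ :=
      IsTopologicalGroup.continuous_conj_prod.comp continuous_swap
    exact hconj.continuousAt (x := (1, g)) (by simpa using hW)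

theorem exists_isCompact_nhds_one_mul_subset_conj_subset [LocallyCompactSpace G]
    {K W : Set G} (hK : IsCompact K) (hW : W ∈ 𝓝 (1 : G)) :
    ∃ V ∈ 𝓝 (1 : G), IsCompact V ∧ V⁻¹ = V ∧ V ⊆ W ∧ V * V ⊆ W ∧
      ∀ g ∈ K, ∀ x ∈ V, g * x * g⁻¹ ∈ W := by
  obtain ⟨C, hC, hCnhds⟩ := exists_compact_mem_nhds (1 : G)
  have hW' : W ∩ C ∩ {x | ∀ g ∈ K, g * x * g⁻¹ ∈ W} ∈ 𝓝 (1 : G) :=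
    inter_mem (inter_mem hW hCnhds) (hK.eventually_forall_conj_mem hW)
  obtain ⟨V, hV, hVclosed, hVinv, hVmul⟩ := exists_closed_nhds_one_inv_eq_mul_subset hW'
  have hVsub : V ⊆ W ∩ C ∩ {x | ∀ g ∈ K, g * x * g⁻¹ ∈ W} :=
    fun x hx => hVmul ⟨x, hx, 1, mem_of_mem_nhds hV, mul_one x⟩
  exact ⟨V, hV, hC.of_isClosed_subset hVclosed fun x hx => (hVsub hx).1.2, hVinv,
    fun x hx => (hVsub hx).1.1, fun x hx => (hVmul hx).1.1, fun g hg x hx => (hVsub hx).2 g hg⟩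

theorem exists_seq_isCompact_nhds_one_mul_subset_conj_subset [LocallyCompactSpace G]
    {K : ℕ → Set G} (hK : ∀ n, IsCompact (K n)) {U : ℕ → Set G} (hU : ∀ n, U n ∈ 𝓝 (1 : G)) :
    ∃ V : ℕ → Set G, (∀ n, V n ∈ 𝓝 (1 : G)) ∧ (∀ n, IsCompact (V n)) ∧
      (∀ n, (V n)⁻¹ = V n) ∧ (∀ n, V n ⊆ U n) ∧ (∀ n, V (n + 1) * V (n + 1) ⊆ V n) ∧
      ∀ n, ∀ g ∈ K n, ∀ x ∈ V (n + 1), g * x * g⁻¹ ∈ V n := by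
  choose! next hnext_nhds hnext_cpt hnext_inv hnext_sub hnext_mul hnext_conj using
    fun n (W : Set G) (hW : W ∈ 𝓝 (1 : G)) => exists_isCompact_nhds_one_mul_subset_conj_subset
      (hK n) (inter_mem hW (hU (n + 1)))
  obtain ⟨V₀, hV₀, hV₀cpt, hV₀inv, hV₀sub, -⟩ :=
    exists_isCompact_nhds_one_mul_subset_conj_subset isCompact_empty (hU 0)
  let V : ℕ → Set G := fun n => Nat.rec V₀ (fun n Vn => next n Vn) n
  have hV : ∀ n, V n ∈ 𝓝 (1 : G) := fun n => by
    induction n with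
    | zero => exact hV₀
    | succ n ih => exact hnext_nhds n (V n) ih
  refine ⟨V, hV, fun n => ?_, fun n => ?_, fun n => ?_,
    fun n x hx => (hnext_mul n (V n) (hV n) hx).1,
    fun n g hg x hx => (hnext_conj n (V n) (hV n) g hg x hx).1⟩
  · cases n with
    | zero => exact hV₀cpt
    | succ n => exact hnext_cpt n (V n) (hV n)
  · cases n with
    | zero => exact hV₀inv
    | succ n => exact hnext_inv n (V n) (hV n)
  · cases n with
    | zero => exact hV₀sub
    | succ n => exact fun x hx => (hnext_sub n (V n) (hV n) hx).2

theorem QuotientGroup.hasBasis_nhds_one_image [T2Space G] (N : Subgroup G) [N.Normal]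
    {V : ℕ → Set G} (hanti : Antitone V) (hnhds : ∀ n, V n ∈ 𝓝 (1 : G))
    (hcpt : ∀ n, IsCompact (V n)) (hN : ⋂ n, V n ⊆ N) :
    (𝓝 (1 : G ⧸ N)).HasBasis (fun _ => True) fun n => ((↑) : G → G ⧸ N) '' V n := by
  rw [← QuotientGroup.mk_one, QuotientGroup.nhds_eq N 1]
  refine ⟨fun W => ⟨fun hW => ?_, fun ⟨n, _, hn⟩ => mem_of_superset (image_mem_map (hnhds n)) hn⟩⟩
  have hpre : ∀ x ∈ ⋂ n, V n, ((↑) : G → G ⧸ N) ⁻¹' W ∈ 𝓝 x := fun x hx => by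
    have hx1 : (x : G ⧸ N) = ((1 : G) : G ⧸ N) := by
      rw [QuotientGroup.eq, mul_one]
      exact inv_mem (hN hx)
    rw [← mem_map, ← QuotientGroup.nhds_eq, hx1, QuotientGroup.nhds_eq]
    exact hW
  obtain ⟨n, hn⟩ := exists_subset_nhds_of_isCompact hanti.directed_ge hcpt hpre
  exact ⟨n, trivial, image_subset_iff.2 hn⟩

theorem IsTopologicalGroup.metrizableSpace_of_isCountablyGenerated [T0Space G]
    [(𝓝 (1 : G)).IsCountablyGenerated] : TopologicalSpace.MetrizableSpace G := by
  let _ : UniformSpace G := IsTopologicalGroup.rightUniformSpace G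
  have : (uniformity G).IsCountablyGenerated := by
    rw [uniformity_eq_comap_nhds_one']
    exact Filter.comap.isCountablyGenerated _ _
  exact UniformSpace.metrizableSpace

end TopologicalGroup

/-- (Kakutani–Kodaira) In a σ-compact locally compact Hausdorff group, given any sequence
of neighbourhoods of the identity, there is a compact normal subgroup contained in their
intersection with metrizable quotient. -/
theorem stmt_9 {G : Type*} [TopologicalSpace G] [Group G] [IsTopologicalGroup G]
    [SigmaCompactSpace G] [LocallyCompactSpace G] [T2Space G]
    (U : ℕ → Set G) (hU : ∀ n, U n ∈ nhds (1 : G)) :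
    ∃ N : Subgroup G, N.Normal ∧ IsCompact (N : Set G) ∧ (N : Set G) ⊆ ⋂ n, U n ∧
      TopologicalSpace.MetrizableSpace (G ⧸ N) := by
  obtain ⟨V, hnhds, hcpt, hinv, hsub, hmul, hconj⟩ :=
    exists_seq_isCompact_nhds_one_mul_subset_conj_subset (isCompact_compactCovering G) hU
  have hone : ∀ n, (1 : G) ∈ V n := fun n => mem_of_mem_nhds (hnhds n)
  let N := halvingSubgroup V hone (fun n => (hinv n).subset) hmul
  have hNnormal : N.Normal := halvingSubgroup_normal fun g => by
    obtain ⟨n₀, hg⟩ := exists_mem_compactCovering g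
    exact eventually_atTop.2 ⟨n₀, fun n hn => hconj n g (compactCovering_subset G hn hg)⟩
  have hNcpt : IsCompact (N : Set G) :=
    (hcpt 0).of_isClosed_subset (isClosed_iInter fun n => (hcpt n).isClosed) (iInter_subset _ 0)
  refine ⟨N, hNnormal, hNcpt, iInter_mono hsub, ?_⟩
  have : IsClosed (N : Set G) := hNcpt.isClosed
  have := (QuotientGroup.hasBasis_nhds_one_image N (antitone_of_mul_subset hone hmul) hnhds hcpt
    subset_rfl).isCountablyGenerated
  exact IsTopologicalGroup.metrizableSpace_of_isCountablyGenerated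
end

section
/- Let G be a topological group and H a closed subgroup of G. If H (with the subspace topology) and the quotient space G/H (with the quotient topology) are both first countable, then G is first countable. -/
/-!
A countable basis at `1` in `H` yields neighbourhoods `W n` of `1` in `G` such that the sets
`(W n)⁻¹ * W n ∩ H` shrink to `1`. With `π : G → G ⧸ H`, the countably many sets
`W n ∩ π⁻¹ B`, `B` running over a countable basis at `π 1`, then form a basis at `1` in `G`:
if `x ∈ W n` and `π x = π w` with `w ∈ W n ∩ V`, then `x = w * (w⁻¹ * x)` lies in `V * V`
as soon as `n` is large enough that `(W n)⁻¹ * W n ∩ H ⊆ V`; and `π` is open, so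
`π (W n ∩ V)` contains some `B`.
-/

open Filter Topology

section

variable {G : Type*} [TopologicalSpace G] [Group G] [IsTopologicalGroup G]

theorem exists_nhds_split_inv_mul {s : Set G} (hs : s ∈ 𝓝 (1 : G)) :
    ∃ V ∈ 𝓝 (1 : G), ∀ v ∈ V, ∀ w ∈ V, v⁻¹ * w ∈ s := by
  have : (fun p : G × G => p.1⁻¹ * p.2) ⁻¹' s ∈ 𝓝 ((1, 1) : G × G) :=
    continuousAt_fst.inv.mul continuousAt_snd (by simpa)
  simpa only [nhds_prod_eq, mem_prod_self_iff, Set.prod_subset_iff, Set.mem_preimage] using this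

theorem IsTopologicalGroup.firstCountableTopology_of_isCountablyGenerated_nhds_one
    [(𝓝 (1 : G)).IsCountablyGenerated] : FirstCountableTopology G :=
  ⟨fun x => by rw [← map_mul_left_nhds_one x]; infer_instance⟩

namespace Subgroup

variable (H : Subgroup G)

theorem exists_seq_nhds_one_inv_mul_mem_nhds [(𝓝 (1 : H)).IsCountablyGenerated] :
    ∃ W : ℕ → Set G, (∀ n, W n ∈ 𝓝 (1 : G)) ∧
      ∀ V ∈ 𝓝 (1 : G), ∃ n, ∀ v ∈ W n, ∀ w ∈ W n, v⁻¹ * w ∈ H → v⁻¹ * w ∈ V := by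
  obtain ⟨A, hA⟩ := (𝓝 (1 : H)).exists_antitone_basis
  have hAG : ∀ n, ∃ U ∈ 𝓝 (1 : G), ((↑) : H → G) ⁻¹' U ⊆ A n := fun n =>
    (mem_nhds_subtype _ _ _).mp (hA.mem n)
  choose U hU hUA using hAG
  choose W hW hWU using fun n => exists_nhds_split_inv_mul (hU n)
  refine ⟨W, hW, fun V hV => ?_⟩
  have hVH : ((↑) : H → G) ⁻¹' V ∈ 𝓝 (1 : H) := (mem_nhds_subtype _ _ _).mpr ⟨V, hV, subset_rfl⟩
  obtain ⟨n, hn⟩ := hA.mem_iff.mp hVH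
  exact ⟨n, fun v hv w hw hvw => hn (hUA n (hWU n v hv w hw) : (⟨_, hvw⟩ : H) ∈ A n)⟩

theorem nhds_one_eq_iInf_principal_inf_comap_mk {W : ℕ → Set G} (hW : ∀ n, W n ∈ 𝓝 (1 : G))
    (hWH : ∀ V ∈ 𝓝 (1 : G), ∃ n, ∀ v ∈ W n, ∀ w ∈ W n, v⁻¹ * w ∈ H → v⁻¹ * w ∈ V) :
    𝓝 (1 : G) = (⨅ n, 𝓟 (W n)) ⊓ Filter.comap ((↑) : G → G ⧸ H) (𝓝 ((1 : G) : G ⧸ H)) := by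
  refine le_antisymm (le_inf (le_iInf fun n => le_principal_iff.mpr (hW n)) ?_) fun V hV => ?_
  · exact (continuous_quotient_mk'.tendsto 1).le_comap
  obtain ⟨V', hV', hV'V⟩ := exists_nhds_one_split hV
  obtain ⟨n, hn⟩ := hWH V' hV'
  have hπ : ((↑) : G → G ⧸ H) '' (W n ∩ V') ∈ 𝓝 ((1 : G) : G ⧸ H) :=
    QuotientGroup.isOpenMap_coe.image_mem_nhds (inter_mem (hW n) hV')
  refine mem_inf_of_inter (mem_iInf_of_mem n (mem_principal_self _)) (preimage_mem_comap hπ) ?_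
  rintro x ⟨hxW, w, ⟨hwW, hwV'⟩, hwx⟩
  have hH : w⁻¹ * x ∈ H := QuotientGroup.eq.mp hwx
  simpa using hV'V w hwV' _ (hn w hwW x hxW hH)

end Subgroup

end

theorem stmt_10_general {G : Type*} [TopologicalSpace G] [Group G] [IsTopologicalGroup G]
    (H : Subgroup G)
    (h1 : FirstCountableTopology H)
    (h2 : FirstCountableTopology (G ⧸ H)) :
    FirstCountableTopology G := by
  obtain ⟨W, hW, hWH⟩ := H.exists_seq_nhds_one_inv_mul_mem_nhds
  have : (𝓝 (1 : G)).IsCountablyGenerated := by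
    rw [H.nhds_one_eq_iInf_principal_inf_comap_mk hW hWH]
    infer_instance
  exact IsTopologicalGroup.firstCountableTopology_of_isCountablyGenerated_nhds_one

/-- If a closed subgroup `H` of a topological group `G` and the quotient `G/H` are both
first countable, then so is `G`. -/
theorem stmt_10 {G : Type*} [TopologicalSpace G] [Group G] [IsTopologicalGroup G]
    (H : Subgroup G) (hH : IsClosed (H : Set G))
    (h1 : FirstCountableTopology H)
    (h2 : FirstCountableTopology (G ⧸ H)) :
    FirstCountableTopology G :=
  stmt_10_general H h1 h2
end

section
/- (Katetov–Efimov) Let X be a dyadic space, i.e., a compact Hausdorff space for which there exist an index type κ and a continuous surjection from the Cantor cube {0,1}^κ onto X. Then every non-isolated point p of X is the limit of a sequence of distinct points of X; that is, there is an injective sequence (x_n) in X with x_n ≠ p for all n and x_n → p. -/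
/-!
Pull the problem back to the cube: `K = f ⁻¹' {p}` is closed, and it is not open because a
continuous surjection from a compact space onto a Hausdorff space is a quotient map. A point `q`
of `K` in the closure of the open set `Kᶜ` is the limit of a sequence in `Kᶜ`: in a product of
discrete spaces, one can pick points of `Kᶜ` agreeing with `q` on ever larger finite sets of
coordinates and differing from `q` only on finitely many of them, and feeding these exceptional
coordinates into the next finite set makes every coordinate eventually equal to `q`. The image of
this sequence converges to `p` avoiding `p`, so its range is infinite, and any injective
enumeration of that range still converges to `p`.
-/

open Filter Topology Set Function

section Sequences

variable {X : Type*} [TopologicalSpace X] [T1Space X]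

theorem infinite_range_of_tendsto_of_forall_ne {x : ℕ → X} {p : X}
    (hx : Tendsto x atTop (𝓝 p)) (hne : ∀ n, x n ≠ p) : (range x).Infinite := by
  intro hfin
  obtain ⟨n, hn⟩ := hfin.isClosed.mem_of_tendsto hx (Eventually.of_forall mem_range_self)
  exact hne n hn

theorem exists_injective_tendsto_of_forall_ne {x : ℕ → X} {p : X}
    (hx : Tendsto x atTop (𝓝 p)) (hne : ∀ n, x n ≠ p) :
    ∃ s : ℕ → X, Injective s ∧ (∀ n, s n ≠ p) ∧ Tendsto s atTop (𝓝 p) := by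
  let e := (infinite_range_of_tendsto_of_forall_ne hx hne).natEmbedding
  choose g hg using fun n => (e n).2
  have hs : x ∘ g = fun n => (e n : X) := funext hg
  have hg_inj : Injective g := fun m n hmn =>
    e.injective (Subtype.ext (by rw [← hg m, ← hg n, hmn]))
  refine ⟨x ∘ g, ?_, fun n => hne (g n), hx.comp hg_inj.nat_tendsto_atTop⟩
  rw [hs]
  exact Subtype.val_injective.comp e.injective

end Sequences

section Pi

variable {ι : Type*} {π : ι → Type*} [∀ i, TopologicalSpace (π i)]

theorem exists_seq_tendsto_of_forall_finset_exists_eq {V : Set (∀ i, π i)} {q : ∀ i, π i}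
    (h : ∀ F : Finset ι, ∃ y ∈ V, ∃ G : Finset ι, (∀ i ∈ F, y i = q i) ∧ ∀ i ∉ G, y i = q i) :
    ∃ y : ℕ → ∀ i, π i, (∀ n, y n ∈ V) ∧ Tendsto y atTop (𝓝 q) := by
  classical
  choose Y hYV G hYF hYG using h
  let F : ℕ → Finset ι := fun n => (fun F => F ∪ G F)^[n] ∅
  have hF_succ (n : ℕ) : F (n + 1) = F n ∪ G (F n) := iterate_succ_apply' _ _ _
  have hF_mono : Monotone F :=
    monotone_nat_of_le_succ fun n => (hF_succ n).symm ▸ Finset.subset_union_left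
  refine ⟨fun n => Y (F n), fun n => hYV _, tendsto_pi_nhds.2 fun i => ?_⟩
  by_cases hi : ∃ n, i ∈ G (F n)
  · obtain ⟨n, hn⟩ := hi
    refine tendsto_const_nhds.congr' ?_
    filter_upwards [eventually_ge_atTop (n + 1)] with k hk
    exact (hYF _ i (hF_mono hk (hF_succ n ▸ Finset.mem_union_right _ hn))).symm
  · exact tendsto_const_nhds.congr fun n => (hYG _ i (not_exists.1 hi n)).symm

variable [∀ i, DiscreteTopology (π i)]

theorem exists_mem_eq_on_finset_of_mem_closure {V : Set (∀ i, π i)} (hV : IsOpen V)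
    {q : ∀ i, π i} (hq : q ∈ closure V) (F : Finset ι) :
    ∃ y ∈ V, ∃ G : Finset ι, (∀ i ∈ F, y i = q i) ∧ ∀ i ∉ G, y i = q i := by
  classical
  have hcyl : (F : Set ι).pi (fun i => {q i}) ∈ 𝓝 q :=
    set_pi_mem_nhds F.finite_toSet fun i _ => mem_nhds_discrete.2 rfl
  obtain ⟨y₀, hy₀F, hy₀V⟩ := mem_closure_iff_nhds.1 hq _ hcyl
  obtain ⟨G, hG⟩ := exists_finset_piecewise_mem_of_mem_nhds (hV.mem_nhds hy₀V) q
  refine ⟨G.piecewise y₀ q, hG, G, fun i hi => ?_, fun i hi => G.piecewise_eq_of_notMem _ _ hi⟩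
  by_cases hiG : i ∈ G
  · rw [G.piecewise_eq_of_mem _ _ hiG]
    exact hy₀F i hi
  · exact G.piecewise_eq_of_notMem _ _ hiG

theorem exists_seq_tendsto_of_mem_closure_of_isOpen {V : Set (∀ i, π i)} (hV : IsOpen V)
    {q : ∀ i, π i} (hq : q ∈ closure V) :
    ∃ y : ℕ → ∀ i, π i, (∀ n, y n ∈ V) ∧ Tendsto y atTop (𝓝 q) :=
  exists_seq_tendsto_of_forall_finset_exists_eq (exists_mem_eq_on_finset_of_mem_closure hV hq)

end Pi

theorem stmt_12_general {X : Type*} [TopologicalSpace X] [T2Space X]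
    (hdyadic : ∃ (κ : Type) (f : (κ → Bool) → X), Continuous f ∧ Function.Surjective f)
    (p : X) (hp : ¬ IsOpen ({p} : Set X)) :
    ∃ x : ℕ → X, Function.Injective x ∧ (∀ n, x n ≠ p) ∧
      Filter.Tendsto x Filter.atTop (nhds p) := by
  obtain ⟨κ, f, hf, hsurj⟩ := hdyadic
  have hK : ¬ IsOpen (f ⁻¹' {p}) := fun h =>
    hp ((hf.isClosedMap.isQuotientMap hf hsurj).isOpen_preimage.1 h)
  obtain ⟨q, hqp, hq⟩ : ∃ q ∈ f ⁻¹' {p}, q ∈ closure (f ⁻¹' {p})ᶜ := by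
    simpa [closure_compl, ← subset_interior_iff_isOpen, not_subset] using hK
  obtain ⟨y, hy, hyq⟩ :=
    exists_seq_tendsto_of_mem_closure_of_isOpen (isClosed_singleton.preimage hf).isOpen_compl hq
  have hfy : Tendsto (f ∘ y) atTop (𝓝 p) := hqp ▸ (hf.tendsto q).comp hyq
  exact exists_injective_tendsto_of_forall_ne hfy hy

/-- (Katetov–Efimov) In a dyadic space (a compact Hausdorff continuous image of a Cantor
cube), every non-isolated point is the limit of an injective sequence of points distinct
from it. -/
theorem stmt_12 {X : Type*} [TopologicalSpace X] [CompactSpace X] [T2Space X]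
    (hdyadic : ∃ (κ : Type) (f : (κ → Bool) → X), Continuous f ∧ Function.Surjective f)
    (p : X) (hp : ¬ IsOpen ({p} : Set X)) :
    ∃ x : ℕ → X, Function.Injective x ∧ (∀ n, x n ≠ p) ∧
      Filter.Tendsto x Filter.atTop (nhds p) :=
  stmt_12_general hdyadic p hp
end
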